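/- Let k : (0,∞) → [0,∞) be nonincreasing and lower semicontinuous, and let σ be a locally finite positive Borel measure on ℝ^n satisfying a doubling condition. Set K(Q) = k(r_Q) for Q ∈ 𝒟. Then there exists C > 0 such that for every Q ∈ 𝒟 and every x ∈ Q, (1/C) k̄(r_Q)(x) ≤ K̄(Q)(x) = (1/σ(Q)) ∑_{Q'∈𝒟, Q'⊆Q} k(r_{Q'}) σ(Q') χ_{Q'}(x) ≤ C k̄(r_Q)(x). -/

import Mathlib

open MeasureTheory ENNReal Set
open scoped Classical ENNReal NNReal

noncomputable section

/-- We model `ℝ^n` as `EuclideanSpace ℝ (Fin n)`. -/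
abbrev Euc (n : ℕ) := EuclideanSpace ℝ (Fin n)

/-- Indices `(k, m)` of dyadic cubes in `ℝ^n`. -/
abbrev DIdx (n : ℕ) := ℤ × (Fin n → ℤ)

/-- The dyadic cube with index `q = (k, m)`, namely `2^{-k}(m + [0,1)^n)`. -/
def dCube (n : ℕ) (q : DIdx n) : Set (Euc n) :=
  {x | ∀ i, (q.2 i : ℝ) ≤ (2:ℝ) ^ q.1 * x i ∧ (2:ℝ) ^ q.1 * x i < (q.2 i : ℝ) + 1}

/-- The side length of the dyadic cube of index `q = (k, m)` is `2^{-k}`. -/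
def sideLen (n : ℕ) (q : DIdx n) : ℝ := (2:ℝ) ^ (-q.1)

/-- Characteristic function of a dyadic cube, with values in `ℝ≥0∞`. -/
def ch (n : ℕ) (q : DIdx n) (x : Euc n) : ℝ≥0∞ := (dCube n q).indicator 1 x

/-- `K̄(Q)(x) = σ(Q)⁻¹ ∑_{Q' ⊆ Q} K(Q') σ(Q') χ_{Q'}(x)`.
(Since `σ(Q') ≤ σ(Q)` for `Q' ⊆ Q`, this is automatically `0` when `σ(Q) = 0`,
by the convention `∞ · 0 = 0` in `ℝ≥0∞`.) -/
def Kbar (n : ℕ) (σ : Measure (Euc n)) (K : DIdx n → ℝ≥0∞) (q : DIdx n) (x : Euc n) : ℝ≥0∞ :=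
  (σ (dCube n q))⁻¹ *
    ∑' q' : DIdx n, if dCube n q' ⊆ dCube n q then K q' * σ (dCube n q') * ch n q' x else 0

/-- `k̄(r)(x) = (1/σ(B(x,r))) ∫_0^r k(s) σ(B(x,s)) ds/s`. -/
def kbar (n : ℕ) (σ : Measure (Euc n)) (k : ℝ → ℝ) (r : ℝ) (x : Euc n) : ℝ≥0∞ :=
  (σ (Metric.ball x r))⁻¹ *
    ∫⁻ s in Ioo (0:ℝ) r, ENNReal.ofReal (k s / s) * σ (Metric.ball x s)

/-- `σ` is a doubling measure: `σ(B(x,2r)) ≤ C₀ σ(B(x,r))` for all `x`, `r > 0`. -/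
def Doubling (n : ℕ) (σ : Measure (Euc n)) : Prop :=
  ∃ C₀ : ℝ, 0 < C₀ ∧ ∀ (x : Euc n) (r : ℝ), 0 < r →
    σ (Metric.ball x (2 * r)) ≤ ENNReal.ofReal C₀ * σ (Metric.ball x r)

/-- The pair `(k,σ)` satisfies the logarithmic bounded oscillation (LBO) condition:
`sup_{y ∈ B(x,r)} k̄(r)(y) ≤ A inf_{y ∈ B(x,r)} k̄(r)(y)` uniformly in `x`, `r`. -/
def LBO (n : ℕ) (σ : Measure (Euc n)) (k : ℝ → ℝ) : Prop :=
  ∃ A : ℝ, 0 < A ∧ ∀ (x : Euc n) (r : ℝ), 0 < r →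
    ∀ y ∈ Metric.ball x r, ∀ z ∈ Metric.ball x r,
      kbar n σ k r y ≤ ENNReal.ofReal A * kbar n σ k r z

/-! The dyadic cubes `Q' ⊆ Q` that contain `x ∈ Q` form the chain `Q = Q₀ ⊋ Q₁ ⊋ ⋯` with
`r_{Q_t} = r_Q / 2^t`, so `σ(Q) K̄(Q)(x) = ∑_t k(r_Q/2^t) σ(Q_t)`. Splitting `(0, r_Q]` into the
dyadic annuli `(r_Q/2^{t+1}, r_Q/2^t]` and using that `k` is nonincreasing, the integral
`σ(B(x, r_Q)) k̄(r_Q)(x)` is comparable to `∑_t k(r_Q/2^t) σ(B(x, r_Q/2^t))`. Finally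
`Q_t ⊆ B(x, 2^n r_{Q_t})` and `B(x, r_{Q_t}) ⊆ B(c_{Q_t}, 2^{n+2} r_{Q_t}/2)` with
`B(c_{Q_t}, r_{Q_t}/2) ⊆ Q_t`, so by doubling `σ(Q_t)` and `σ(B(x, r_{Q_t}))` are comparable
with constants depending only on `n` and the doubling constant. -/

open Metric

variable {n : ℕ}

def dyadicCubeAt (j : ℤ) (x : Euc n) : DIdx n := (j, fun i => ⌊(2:ℝ) ^ j * x i⌋)

def dyadicCenter (q : DIdx n) : Euc n :=
  WithLp.toLp 2 (fun i => ((q.2 i : ℝ) + 1 / 2) * sideLen n q)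

lemma sideLen_pos (q : DIdx n) : 0 < sideLen n q := by
  unfold sideLen; positivity

lemma two_zpow_mul_sideLen (q : DIdx n) : (2:ℝ) ^ q.1 * sideLen n q = 1 := by
  rw [sideLen, zpow_neg, mul_inv_cancel₀ (by positivity)]

lemma sideLen_dyadicCubeAt_add (Q : DIdx n) (t : ℕ) (x : Euc n) :
    sideLen n (dyadicCubeAt (Q.1 + t) x) = sideLen n Q / 2 ^ t := by
  simp only [sideLen, dyadicCubeAt]
  rw [neg_add, zpow_add₀ two_ne_zero, zpow_neg (2:ℝ) (t:ℤ), zpow_natCast, div_eq_mul_inv]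

lemma mem_dCube_iff {q : DIdx n} {x : Euc n} :
    x ∈ dCube n q ↔ ∀ i, ⌊(2:ℝ) ^ q.1 * x i⌋ = q.2 i := by
  simp only [dCube, mem_ofPred_eq, Int.floor_eq_iff]

lemma mem_dCube_dyadicCubeAt (j : ℤ) (x : Euc n) : x ∈ dCube n (dyadicCubeAt j x) :=
  mem_dCube_iff.2 fun _ => rfl

lemma eq_dyadicCubeAt_of_mem {q : DIdx n} {x : Euc n} (hx : x ∈ dCube n q) :
    q = dyadicCubeAt q.1 x :=
  Prod.ext rfl (funext fun i => (mem_dCube_iff.1 hx i).symm)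

lemma dCube_dyadicCubeAt_subset {j j' : ℤ} (h : j ≤ j') (x : Euc n) :
    dCube n (dyadicCubeAt j' x) ⊆ dCube n (dyadicCubeAt j x) := by
  obtain ⟨d, rfl⟩ := Int.le.dest h
  have hfloor : ∀ z : ℝ, ⌊(2:ℝ) ^ j * z⌋ = ⌊(2:ℝ) ^ (j + d) * z⌋ / (2 ^ d : ℕ) := by
    intro z
    rw [← Int.floor_div_natCast, zpow_add₀ two_ne_zero, zpow_natCast]
    push_cast
    field_simp
  intro y hy
  refine mem_dCube_iff.2 fun i => ?_
  simp only [dyadicCubeAt, hfloor]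
  congr 1
  exact mem_dCube_iff.1 hy i

lemma two_zpow_mul_sub_dyadicCenter (q : DIdx n) (y : Euc n) (i : Fin n) :
    (2:ℝ) ^ q.1 * (y i - dyadicCenter q i) = (2:ℝ) ^ q.1 * y i - ((q.2 i : ℝ) + 1 / 2) := by
  simp only [dyadicCenter]
  linear_combination (-((q.2 i : ℝ) + 1 / 2)) * two_zpow_mul_sideLen q

lemma abs_sub_dyadicCenter (q : DIdx n) (y : Euc n) (i : Fin n) :
    |y i - dyadicCenter q i| = sideLen n q * |(2:ℝ) ^ q.1 * y i - ((q.2 i : ℝ) + 1 / 2)| := by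
  rw [← two_zpow_mul_sub_dyadicCenter, abs_mul, abs_of_pos (by positivity : (0:ℝ) < 2 ^ q.1),
    ← mul_assoc, mul_comm (sideLen n q), two_zpow_mul_sideLen, one_mul]

lemma le_of_dCube_subset (hn : 0 < n) {q q' : DIdx n} (h : dCube n q' ⊆ dCube n q) :
    q.1 ≤ q'.1 := by
  set p : ℝ → Euc n := fun c => WithLp.toLp 2 (fun i => ((q'.2 i : ℝ) + c) * sideLen n q')
  have hp : ∀ c i, (2:ℝ) ^ q'.1 * p c i = q'.2 i + c := fun c i => by
    simp only [p]
    rw [mul_left_comm, two_zpow_mul_sideLen, mul_one]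
  have hmem : ∀ c : ℝ, 0 ≤ c → c < 1 → p c ∈ dCube n q := fun c hc0 hc1 =>
    h fun i => by rw [hp]; constructor <;> linarith
  -- `p 0` and `p (1/2)` both lie in `q`, yet at scale `2^q.1` their first coordinates differ
  -- by `2^(q.1 - q'.1) / 2`
  set i : Fin n := ⟨0, hn⟩
  have hlow := (hmem 0 le_rfl one_pos i).1
  have hhigh := (hmem (1 / 2) (by norm_num) (by norm_num) i).2
  have hdiff : p (1 / 2) i - p 0 i = sideLen n q' / 2 := by simp only [p]; ring
  have hscale : (2:ℝ) ^ q.1 * sideLen n q' = 2 ^ (q.1 - q'.1) := by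
    rw [sideLen, ← zpow_add₀ two_ne_zero, sub_eq_add_neg]
  have hlt : (2:ℝ) ^ (q.1 - q'.1) < 2 ^ (1:ℤ) := by
    rw [← hscale, zpow_one]
    have : (2:ℝ) ^ q.1 * (p (1 / 2) i - p 0 i) < 1 := by rw [mul_sub]; linarith
    rw [hdiff] at this
    linarith
  have := (zpow_lt_zpow_iff_right₀ _root_.one_lt_two).1 hlt
  omega

lemma EuclideanSpace.dist_le_sqrt_card_mul {ι : Type*} [Fintype ι] {x y : EuclideanSpace ℝ ι}
    {d : ℝ} (hd : 0 ≤ d) (h : ∀ i, |x i - y i| ≤ d) :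
    dist x y ≤ √(Fintype.card ι) * d := by
  rw [EuclideanSpace.dist_eq, ← Real.sqrt_sq hd, ← Real.sqrt_mul (Nat.cast_nonneg _)]
  gcongr
  calc ∑ i, dist (x i) (y i) ^ 2 ≤ ∑ _i : ι, d ^ 2 := by
        gcongr with i
        rw [Real.dist_eq]
        exact h i
    _ = Fintype.card ι * d ^ 2 := by simp

lemma sqrt_natCast_lt_two_pow (n : ℕ) : √(n : ℝ) < 2 ^ n := by
  rw [Real.sqrt_lt' (by positivity)]
  have h : (n : ℝ) < 2 ^ n := by exact_mod_cast Nat.lt_two_pow_self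
  nlinarith [one_le_pow₀ (M₀ := ℝ) (a := 2) (n := n) (by norm_num)]

lemma dist_dyadicCenter_le {q : DIdx n} {x : Euc n} (hx : x ∈ dCube n q) :
    dist x (dyadicCenter q) ≤ √(n : ℝ) * (sideLen n q / 2) := by
  simpa using EuclideanSpace.dist_le_sqrt_card_mul (x := x) (y := dyadicCenter q)
    (by linarith [sideLen_pos q]) fun i => by
      rw [abs_sub_dyadicCenter, div_eq_mul_one_div (sideLen n q)]
      gcongr
      · exact (sideLen_pos q).le
      · rw [abs_le]
        constructor <;> linarith [hx i]

lemma ball_dyadicCenter_subset (q : DIdx n) :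
    ball (dyadicCenter q) (sideLen n q / 2) ⊆ dCube n q := by
  intro y hy i
  have hcoord :
      sideLen n q * |(2:ℝ) ^ q.1 * y i - ((q.2 i : ℝ) + 1 / 2)| < sideLen n q * (1 / 2) := by
    rw [← abs_sub_dyadicCenter, ← Real.dist_eq]
    exact (PiLp.dist_apply_le y (dyadicCenter q) i).trans_lt (by linarith [mem_ball.1 hy])
  have := abs_lt.1 (lt_of_mul_lt_mul_left hcoord (sideLen_pos q).le)
  constructor <;> linarith

lemma dCube_subset_ball {q : DIdx n} {x : Euc n} (hx : x ∈ dCube n q) :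
    dCube n q ⊆ ball x (2 ^ n * sideLen n q) := by
  intro y hy
  rw [mem_ball]
  calc dist y x ≤ dist y (dyadicCenter q) + dist x (dyadicCenter q) := dist_triangle_right _ _ _
    _ ≤ √(n : ℝ) * sideLen n q := by
      linarith [dist_dyadicCenter_le hx, dist_dyadicCenter_le hy]
    _ < 2 ^ n * sideLen n q := by gcongr; exacts [sideLen_pos q, sqrt_natCast_lt_two_pow n]

lemma ball_subset_ball_dyadicCenter {q : DIdx n} {x : Euc n} (hx : x ∈ dCube n q) :
    ball x (sideLen n q) ⊆ ball (dyadicCenter q) (2 ^ (n + 2) * (sideLen n q / 2)) := by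
  refine ball_subset_ball' ?_
  have hs := sideLen_pos q
  have hsqrt := mul_lt_mul_of_pos_right (sqrt_natCast_lt_two_pow n) (half_pos hs)
  have hpow : (1:ℝ) ≤ 2 ^ n := one_le_pow₀ (by norm_num)
  have : (2:ℝ) ^ (n + 2) * (sideLen n q / 2) = 2 * 2 ^ n * sideLen n q := by ring
  nlinarith [dist_dyadicCenter_le hx]

lemma iUnion_Ioc_div_two_pow {r : ℝ} (hr : 0 < r) :
    ⋃ t : ℕ, Ioc (r / 2 ^ (t + 1)) (r / 2 ^ t) = Ioc 0 r := by
  ext s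
  simp only [mem_iUnion, mem_Ioc]
  constructor
  · rintro ⟨t, hlow, hhigh⟩
    exact ⟨(by positivity : (0:ℝ) < r / 2 ^ (t + 1)).trans hlow,
      hhigh.trans (div_le_self hr.le (one_le_pow₀ (by norm_num)))⟩
  · rintro ⟨hs, hsr⟩
    obtain ⟨t, ht, ht'⟩ := exists_nat_pow_near ((one_le_div hs).2 hsr) (by norm_num : (1:ℝ) < 2)
    refine ⟨t, ?_, ?_⟩
    · rwa [div_lt_iff₀ (by positivity), mul_comm, ← div_lt_iff₀ hs]
    · rwa [le_div_iff₀ (by positivity), mul_comm, ← le_div_iff₀ hs]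

lemma lintegral_Ioo_eq_tsum_Ioc (f : ℝ → ℝ≥0∞) {r : ℝ} (hr : 0 < r) :
    ∫⁻ s in Ioo 0 r, f s = ∑' t : ℕ, ∫⁻ s in Ioc (r / 2 ^ (t + 1)) (r / 2 ^ t), f s := by
  have hanti : Antitone fun t : ℕ => r / 2 ^ t := fun _ _ h =>
    div_le_div_of_nonneg_left hr.le (by positivity) (pow_le_pow_right₀ (by norm_num) h)
  have hdisj :
      Pairwise (Function.onFun Disjoint fun t : ℕ => Ioc (r / 2 ^ (t + 1)) (r / 2 ^ t)) := by
    simpa only [Order.succ_eq_add_one] using hanti.pairwise_disjoint_on_Ioc_succ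
  rw [setLIntegral_congr Ioo_ae_eq_Ioc, ← iUnion_Ioc_div_two_pow hr,
    Measure.restrict_iUnion hdisj fun _ => measurableSet_Ioc, lintegral_sum_measure]

section MetricMeasure

variable {X : Type*} [PseudoMetricSpace X] [MeasurableSpace X]

def IsDoublingWith (σ : Measure X) (c : ℝ≥0∞) : Prop :=
  ∀ (x : X) (r : ℝ), 0 < r → σ (ball x (2 * r)) ≤ c * σ (ball x r)

variable {σ : Measure X} {c : ℝ≥0∞} {k : ℝ → ℝ}

lemma IsDoublingWith.measure_ball_two_pow_mul_le (hσ : IsDoublingWith σ c) (N : ℕ) (x : X)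
    {r : ℝ} (hr : 0 < r) :
    σ (ball x (2 ^ N * r)) ≤ c ^ N * σ (ball x r) := by
  induction N with
  | zero => simp
  | succ N ih =>
    calc σ (ball x (2 ^ (N + 1) * r)) = σ (ball x (2 * (2 ^ N * r))) := by ring_nf
      _ ≤ c * σ (ball x (2 ^ N * r)) := hσ x _ (by positivity)
      _ ≤ c * (c ^ N * σ (ball x r)) := by gcongr
      _ = c ^ (N + 1) * σ (ball x r) := by ring

lemma setLIntegral_Ioc_le (hk0 : ∀ r ∈ Ioi (0:ℝ), 0 ≤ k r) (hmono : AntitoneOn k (Ioi 0))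
    (x : X) {a : ℝ} (ha : 0 < a) :
    ∫⁻ s in Ioc a (2 * a), ENNReal.ofReal (k s / s) * σ (ball x s) ≤
      ENNReal.ofReal (k a) * σ (ball x (2 * a)) := by
  have hbound : ∀ s ∈ Ioc a (2 * a), ENNReal.ofReal (k s / s) * σ (ball x s) ≤
      ENNReal.ofReal (k a / a) * σ (ball x (2 * a)) := by
    rintro s ⟨has, hs2a⟩
    exact mul_le_mul' (ENNReal.ofReal_le_ofReal
      (div_le_div₀ (hk0 a ha) (hmono ha (ha.trans has) has.le) ha has.le))
      (measure_mono (ball_subset_ball hs2a))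
  calc _ ≤ ∫⁻ _ in Ioc a (2 * a), ENNReal.ofReal (k a / a) * σ (ball x (2 * a)) :=
        setLIntegral_mono' measurableSet_Ioc hbound
    _ = ENNReal.ofReal (k a / a * a) * σ (ball x (2 * a)) := by
        rw [setLIntegral_const, Real.volume_Ioc, show 2 * a - a = a by ring, mul_right_comm,
          ← ENNReal.ofReal_mul (div_nonneg (hk0 a ha) ha.le)]
    _ = _ := by rw [div_mul_cancel₀ _ ha.ne']

lemma le_setLIntegral_Ioc (hk0 : ∀ r ∈ Ioi (0:ℝ), 0 ≤ k r) (hmono : AntitoneOn k (Ioi 0))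
    (x : X) {a : ℝ} (ha : 0 < a) :
    ENNReal.ofReal (k (2 * a)) * σ (ball x a) ≤
      2 * ∫⁻ s in Ioc a (2 * a), ENNReal.ofReal (k s / s) * σ (ball x s) := by
  have h2a : 0 < 2 * a := by positivity
  have hbound : ∀ s ∈ Ioc a (2 * a), ENNReal.ofReal (k (2 * a) / (2 * a)) * σ (ball x a) ≤
      ENNReal.ofReal (k s / s) * σ (ball x s) := by
    rintro s ⟨has, hs2a⟩
    have hs : 0 < s := ha.trans has
    exact mul_le_mul' (ENNReal.ofReal_le_ofReal
      (div_le_div₀ (hk0 s hs) (hmono hs h2a hs2a) hs hs2a))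
      (measure_mono (ball_subset_ball has.le))
  have hk2a : ENNReal.ofReal (k (2 * a)) = 2 * (ENNReal.ofReal (k (2 * a) / (2 * a)) *
      ENNReal.ofReal a) := by
    rw [← ENNReal.ofReal_mul (div_nonneg (hk0 _ h2a) h2a.le), ← ENNReal.ofReal_ofNat 2,
      ← ENNReal.ofReal_mul zero_le_two]
    congr 1
    field_simp
  calc _ = 2 * ∫⁻ _ in Ioc a (2 * a), ENNReal.ofReal (k (2 * a) / (2 * a)) * σ (ball x a) := by
        rw [setLIntegral_const, Real.volume_Ioc, show 2 * a - a = a by ring, hk2a]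
        ring
    _ ≤ _ := mul_le_mul_right (setLIntegral_mono' measurableSet_Ioc hbound) 2

def dyadicBallSum (σ : Measure X) (k : ℝ → ℝ) (x : X) (r : ℝ) : ℝ≥0∞ :=
  ∑' t : ℕ, ENNReal.ofReal (k (r / 2 ^ t)) * σ (ball x (r / 2 ^ t))

lemma two_mul_div_two_pow_succ (r : ℝ) (t : ℕ) : 2 * (r / 2 ^ (t + 1)) = r / 2 ^ t := by
  rw [pow_succ]
  field_simp

lemma IsDoublingWith.measure_ball_div_two_pow_le (hσ : IsDoublingWith σ c) (x : X) {r : ℝ}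
    (hr : 0 < r) (t : ℕ) : σ (ball x (r / 2 ^ t)) ≤ c * σ (ball x (r / 2 ^ (t + 1))) := by
  simpa only [two_mul_div_two_pow_succ] using hσ x (r / 2 ^ (t + 1)) (by positivity)

lemma IsDoublingWith.setLIntegral_le_mul_dyadicBallSum (hσ : IsDoublingWith σ c)
    (hk0 : ∀ r ∈ Ioi (0:ℝ), 0 ≤ k r) (hmono : AntitoneOn k (Ioi 0)) (x : X) {r : ℝ}
    (hr : 0 < r) :
    ∫⁻ s in Ioo 0 r, ENNReal.ofReal (k s / s) * σ (ball x s) ≤ c * dyadicBallSum σ k x r := by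
  rw [lintegral_Ioo_eq_tsum_Ioc _ hr, dyadicBallSum]
  calc _ ≤ ∑' t : ℕ, c * (ENNReal.ofReal (k (r / 2 ^ (t + 1))) * σ (ball x (r / 2 ^ (t + 1)))) := by
        refine ENNReal.tsum_le_tsum fun t => ?_
        have hpiece :=
          setLIntegral_Ioc_le (σ := σ) hk0 hmono x (by positivity : 0 < r / 2 ^ (t + 1))
        rw [two_mul_div_two_pow_succ] at hpiece
        refine hpiece.trans ?_
        rw [mul_left_comm]
        gcongr
        exact hσ.measure_ball_div_two_pow_le x hr t
    _ = c * ∑' t : ℕ, ENNReal.ofReal (k (r / 2 ^ (t + 1))) * σ (ball x (r / 2 ^ (t + 1))) :=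
        ENNReal.tsum_mul_left
    _ ≤ _ := mul_le_mul_right (ENNReal.tsum_comp_le_tsum_of_injective (add_left_injective 1)
          fun t => ENNReal.ofReal (k (r / 2 ^ t)) * σ (ball x (r / 2 ^ t))) c

lemma IsDoublingWith.dyadicBallSum_le_mul_setLIntegral (hσ : IsDoublingWith σ c)
    (hk0 : ∀ r ∈ Ioi (0:ℝ), 0 ≤ k r) (hmono : AntitoneOn k (Ioi 0)) (x : X) {r : ℝ}
    (hr : 0 < r) :
    dyadicBallSum σ k x r ≤ 2 * c * ∫⁻ s in Ioo 0 r, ENNReal.ofReal (k s / s) * σ (ball x s) := by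
  rw [lintegral_Ioo_eq_tsum_Ioc _ hr, dyadicBallSum, ← ENNReal.tsum_mul_left]
  refine ENNReal.tsum_le_tsum fun t => ?_
  have hpiece := le_setLIntegral_Ioc (σ := σ) hk0 hmono x (by positivity : 0 < r / 2 ^ (t + 1))
  rw [two_mul_div_two_pow_succ] at hpiece
  calc _ ≤ ENNReal.ofReal (k (r / 2 ^ t)) * (c * σ (ball x (r / 2 ^ (t + 1)))) := by
        gcongr
        exact hσ.measure_ball_div_two_pow_le x hr t
    _ = c * (ENNReal.ofReal (k (r / 2 ^ t)) * σ (ball x (r / 2 ^ (t + 1)))) := mul_left_comm _ _ _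
    _ ≤ c * (2 * ∫⁻ s in Ioc (r / 2 ^ (t + 1)) (r / 2 ^ t),
          ENNReal.ofReal (k s / s) * σ (ball x s)) := by gcongr
    _ = _ := by ring

end MetricMeasure

lemma ENNReal.inv_le_mul_inv_of_le_mul {a b e : ℝ≥0∞} (he0 : e ≠ 0) (hetop : e ≠ ∞)
    (h : a ≤ e * b) : b⁻¹ ≤ e * a⁻¹ :=
  calc b⁻¹ = e * (e * b)⁻¹ := by
        rw [ENNReal.mul_inv (Or.inl he0) (Or.inl hetop), ← mul_assoc,
          ENNReal.mul_inv_cancel he0 hetop, one_mul]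
    _ ≤ e * a⁻¹ := mul_le_mul_right (ENNReal.inv_le_inv' h) e

section DyadicCubeMeasure

def dyadicChainSum (σ : Measure (Euc n)) (K : DIdx n → ℝ≥0∞) (Q : DIdx n) (x : Euc n) : ℝ≥0∞ :=
  ∑' t : ℕ, K (dyadicCubeAt (Q.1 + t) x) * σ (dCube n (dyadicCubeAt (Q.1 + t) x))

variable {σ : Measure (Euc n)} {c : ℝ≥0∞} {k : ℝ → ℝ}

lemma IsDoublingWith.measure_dCube_le (hσ : IsDoublingWith σ c) {q : DIdx n} {x : Euc n}
    (hx : x ∈ dCube n q) : σ (dCube n q) ≤ c ^ n * σ (ball x (sideLen n q)) :=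
  (measure_mono (dCube_subset_ball hx)).trans
    (hσ.measure_ball_two_pow_mul_le n x (sideLen_pos q))

lemma IsDoublingWith.measure_ball_le_measure_dCube (hσ : IsDoublingWith σ c) {q : DIdx n}
    {x : Euc n} (hx : x ∈ dCube n q) :
    σ (ball x (sideLen n q)) ≤ c ^ (n + 2) * σ (dCube n q) :=
  calc σ (ball x (sideLen n q))
      ≤ σ (ball (dyadicCenter q) (2 ^ (n + 2) * (sideLen n q / 2))) :=
        measure_mono (ball_subset_ball_dyadicCenter hx)
    _ ≤ c ^ (n + 2) * σ (ball (dyadicCenter q) (sideLen n q / 2)) :=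
        hσ.measure_ball_two_pow_mul_le _ _ (half_pos (sideLen_pos q))
    _ ≤ c ^ (n + 2) * σ (dCube n q) := by gcongr; exact ball_dyadicCenter_subset q

lemma Kbar_eq_inv_mul_dyadicChainSum (hn : 0 < n) (σ : Measure (Euc n)) (K : DIdx n → ℝ≥0∞)
    {Q : DIdx n} {x : Euc n} (hx : x ∈ dCube n Q) :
    Kbar n σ K Q x = (σ (dCube n Q))⁻¹ * dyadicChainSum σ K Q x := by
  set f : DIdx n → ℝ≥0∞ := fun q' =>
    if dCube n q' ⊆ dCube n Q then K q' * σ (dCube n q') * ch n q' x else 0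
  set chain : ℕ → DIdx n := fun t => dyadicCubeAt (Q.1 + t) x
  have hinj : Function.Injective chain := fun t u h => by
    have : Q.1 + t = Q.1 + u := congrArg Prod.fst h
    omega
  -- a cube `Q' ⊆ Q` contributes only if `x ∈ Q'`, and then `Q'` is one of the `chain t`
  have hsupp : Function.support f ⊆ range chain := by
    intro q' hq'
    by_cases hsub : dCube n q' ⊆ dCube n Q
    · have hxq' : x ∈ dCube n q' := by
        by_contra hxn
        simp [f, hsub, ch, hxn] at hq'
      have hlevel := le_of_dCube_subset hn hsub
      refine ⟨(q'.1 - Q.1).toNat, ?_⟩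
      conv_rhs => rw [eq_dyadicCubeAt_of_mem hxq']
      simp only [chain]
      congr 1
      omega
    · simp [f, hsub] at hq'
  have hchain : ∀ t, f (chain t) = K (chain t) * σ (dCube n (chain t)) := fun t => by
    have hsub : dCube n (chain t) ⊆ dCube n Q := by
      have := dCube_dyadicCubeAt_subset (j := Q.1) (j' := Q.1 + t) (by omega) x
      rwa [← eq_dyadicCubeAt_of_mem hx] at this
    have hmem : x ∈ dCube n (chain t) := mem_dCube_dyadicCubeAt _ x
    simp only [f, if_pos hsub, ch, indicator_of_mem hmem, Pi.one_apply, mul_one]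
  rw [Kbar, dyadicChainSum, ← hinj.tsum_eq hsupp]
  simp only [hchain, chain]

lemma IsDoublingWith.dyadicChainSum_le_mul_dyadicBallSum (hσ : IsDoublingWith σ c)
    (Q : DIdx n) (x : Euc n) :
    dyadicChainSum σ (fun q => ENNReal.ofReal (k (sideLen n q))) Q x ≤
      c ^ n * dyadicBallSum σ k x (sideLen n Q) := by
  rw [dyadicChainSum, dyadicBallSum, ← ENNReal.tsum_mul_left]
  refine ENNReal.tsum_le_tsum fun t => ?_
  rw [mul_left_comm, ← sideLen_dyadicCubeAt_add]
  exact mul_le_mul_right (hσ.measure_dCube_le (mem_dCube_dyadicCubeAt _ x)) _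

lemma IsDoublingWith.dyadicBallSum_le_mul_dyadicChainSum (hσ : IsDoublingWith σ c)
    (Q : DIdx n) (x : Euc n) :
    dyadicBallSum σ k x (sideLen n Q) ≤
      c ^ (n + 2) * dyadicChainSum σ (fun q => ENNReal.ofReal (k (sideLen n q))) Q x := by
  rw [dyadicChainSum, dyadicBallSum, ← ENNReal.tsum_mul_left]
  refine ENNReal.tsum_le_tsum fun t => ?_
  rw [mul_left_comm, ← sideLen_dyadicCubeAt_add]
  exact mul_le_mul_right (hσ.measure_ball_le_measure_dCube (mem_dCube_dyadicCubeAt _ x)) _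

lemma IsDoublingWith.Kbar_le_mul_kbar (hσ : IsDoublingWith σ c) (hc0 : c ≠ 0) (hctop : c ≠ ∞)
    (hn : 0 < n) (hk0 : ∀ r ∈ Ioi (0:ℝ), 0 ≤ k r) (hmono : AntitoneOn k (Ioi 0)) {Q : DIdx n}
    {x : Euc n} (hx : x ∈ dCube n Q) :
    Kbar n σ (fun q => ENNReal.ofReal (k (sideLen n q))) Q x ≤
      2 * c ^ (2 * n + 3) * kbar n σ k (sideLen n Q) x := by
  rw [Kbar_eq_inv_mul_dyadicChainSum hn σ _ hx, kbar]
  calc _ ≤ c ^ (n + 2) * (σ (ball x (sideLen n Q)))⁻¹ *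
        (c ^ n * (2 * c * ∫⁻ s in Ioo 0 (sideLen n Q),
          ENNReal.ofReal (k s / s) * σ (ball x s))) :=
        mul_le_mul'
          (ENNReal.inv_le_mul_inv_of_le_mul (pow_ne_zero _ hc0) (pow_ne_top hctop)
            (hσ.measure_ball_le_measure_dCube hx))
          ((hσ.dyadicChainSum_le_mul_dyadicBallSum Q x).trans (mul_le_mul_right
            (hσ.dyadicBallSum_le_mul_setLIntegral hk0 hmono x (sideLen_pos Q)) _))
    _ = _ := by ring

lemma IsDoublingWith.kbar_le_mul_Kbar (hσ : IsDoublingWith σ c) (hc0 : c ≠ 0) (hctop : c ≠ ∞)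
    (hn : 0 < n) (hk0 : ∀ r ∈ Ioi (0:ℝ), 0 ≤ k r) (hmono : AntitoneOn k (Ioi 0)) {Q : DIdx n}
    {x : Euc n} (hx : x ∈ dCube n Q) :
    kbar n σ k (sideLen n Q) x ≤
      c ^ (2 * n + 3) * Kbar n σ (fun q => ENNReal.ofReal (k (sideLen n q))) Q x := by
  rw [Kbar_eq_inv_mul_dyadicChainSum hn σ _ hx, kbar]
  calc _ ≤ c ^ n * (σ (dCube n Q))⁻¹ *
        (c * (c ^ (n + 2) * dyadicChainSum σ (fun q => ENNReal.ofReal (k (sideLen n q))) Q x)) :=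
        mul_le_mul'
          (ENNReal.inv_le_mul_inv_of_le_mul (pow_ne_zero _ hc0) (pow_ne_top hctop)
            (hσ.measure_dCube_le hx))
          ((hσ.setLIntegral_le_mul_dyadicBallSum hk0 hmono x (sideLen_pos Q)).trans
            (mul_le_mul_right (hσ.dyadicBallSum_le_mul_dyadicChainSum Q x) _))
    _ = _ := by ring

end DyadicCubeMeasure

theorem stmt13_general (n : ℕ) (hn : 0 < n) (k : ℝ → ℝ)
    (hk0 : ∀ r ∈ Ioi (0:ℝ), 0 ≤ k r) (hmono : AntitoneOn k (Ioi (0:ℝ)))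
    (σ : Measure (Euc n)) (hσ : Doubling n σ) :
    ∃ C : ℝ, 0 < C ∧ ∀ Q : DIdx n, ∀ x ∈ dCube n Q,
      ENNReal.ofReal C⁻¹ * kbar n σ k (sideLen n Q) x ≤
          Kbar n σ (fun q => ENNReal.ofReal (k (sideLen n q))) Q x ∧
        Kbar n σ (fun q => ENNReal.ofReal (k (sideLen n q))) Q x ≤
          ENNReal.ofReal C * kbar n σ k (sideLen n Q) x := by
  obtain ⟨C₀, hC₀, hσ⟩ := hσ
  have hσ : IsDoublingWith σ (ENNReal.ofReal C₀) := hσ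
  have hc0 : ENNReal.ofReal C₀ ≠ 0 := (ENNReal.ofReal_pos.2 hC₀).ne'
  have hC : ENNReal.ofReal (2 * C₀ ^ (2 * n + 3)) = 2 * ENNReal.ofReal C₀ ^ (2 * n + 3) := by
    rw [ENNReal.ofReal_mul zero_le_two, ENNReal.ofReal_pow hC₀.le, ENNReal.ofReal_ofNat]
  refine ⟨2 * C₀ ^ (2 * n + 3), by positivity, fun Q x hx => ⟨?_, ?_⟩⟩
  · rw [ENNReal.ofReal_inv_of_pos (by positivity),
      ENNReal.inv_mul_le_iff (ENNReal.ofReal_pos.2 (by positivity)).ne' ENNReal.ofReal_ne_top, hC]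
    calc _ ≤ ENNReal.ofReal C₀ ^ (2 * n + 3) * _ :=
          hσ.kbar_le_mul_Kbar hc0 ENNReal.ofReal_ne_top hn hk0 hmono hx
      _ ≤ _ := mul_le_mul_left (le_mul_of_one_le_left' one_le_two) _
  · rw [hC]
    exact hσ.Kbar_le_mul_kbar hc0 ENNReal.ofReal_ne_top hn hk0 hmono hx

/-- Let `k : (0,∞) → [0,∞)` be nonincreasing and lower semicontinuous,
`σ` a locally finite doubling measure on `ℝ^n`, and `K(Q) = k(r_Q)`. Then there is `C > 0`
such that for every dyadic cube `Q` and `x ∈ Q`,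
`(1/C) k̄(r_Q)(x) ≤ K̄(Q)(x) ≤ C k̄(r_Q)(x)`. -/
theorem stmt13 (n : ℕ) (hn : 0 < n) (k : ℝ → ℝ)
    (hk0 : ∀ r ∈ Ioi (0:ℝ), 0 ≤ k r) (hmono : AntitoneOn k (Ioi (0:ℝ)))
    (hlsc : LowerSemicontinuousOn k (Ioi (0:ℝ)))
    (σ : Measure (Euc n)) [IsLocallyFiniteMeasure σ] (hσ : Doubling n σ) :
    ∃ C : ℝ, 0 < C ∧ ∀ Q : DIdx n, ∀ x ∈ dCube n Q,
      ENNReal.ofReal C⁻¹ * kbar n σ k (sideLen n Q) x ≤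
          Kbar n σ (fun q => ENNReal.ofReal (k (sideLen n q))) Q x ∧
        Kbar n σ (fun q => ENNReal.ofReal (k (sideLen n q))) Q x ≤
          ENNReal.ofReal C * kbar n σ k (sideLen n Q) x :=
  stmt13_general n hn k hk0 hmono σ hσ
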